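/- Let μ be a probability measure on Σ, p, n ≥ 1, r = max(p, n), m ≥ r, D ∈ ℝ and ε > 0. For a finite word w let 𝟏^{(b)}_w = 1 if μ([w]) ∈ [2^{-|w|(D+2ε)}, 2^{-|w|(D−2ε)}] and 𝟏^{(b)}_w = 0 otherwise. Then Σ_{u,v ∈ Σ_m : (u|_{p+1}, v|_{p+1}) ∈ 𝒫_p} 𝟏^{(b)}_{u|_r} · 𝟏^{(b)}_{v|_r} · 𝟏^{(b)}_u · 𝟏^{(b)}_v ≤ 3^{r−p+1} · 2^{2m(D+2ε) − r(D−2ε)}. -/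

import Mathlib

open MeasureTheory Filter Set

noncomputable section

abbrev Sig := ℕ → Bool

def shift (t : Sig) : Sig := fun n => t (n + 1)

def birkhoff (φ : Sig → ℝ) (n : ℕ) (t : Sig) : ℝ :=
  ∑ i ∈ Finset.range n, φ (shift^[i] t)

def cylN (t : Sig) (n : ℕ) : Set Sig := {s | ∀ i < n, s i = t i}

def cylF {n : ℕ} (w : Fin n → Bool) : Set Sig := {t | ∀ i : Fin n, t i = w i}

def takeF {m : ℕ} (w : Fin m → Bool) (k : ℕ) : Fin k → Bool :=
  fun i => if h : (i : ℕ) < m then w ⟨i, h⟩ else false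

def takeInf (t : Sig) (k : ℕ) : Fin k → Bool := fun i => t i

noncomputable def lamF {n : ℕ} (w : Fin n → Bool) : ℝ :=
  ∑ i : Fin n, if w i then (2:ℝ) ^ (-((i:ℕ):ℤ) - 1) else 0

noncomputable def lamInf (t : Sig) : ℝ :=
  ∑' i : ℕ, if t i then (2:ℝ) ^ (-(i:ℤ) - 1) else 0

noncomputable def rho (s t : Sig) : ℝ :=
  sInf {r : ℝ | ∃ n : ℕ, r = (2:ℝ) ^ (-(n:ℤ)) ∧ ∀ i < n, s i = t i}

noncomputable def distH (A B : Set Sig) : ℝ :=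
  max (⨆ a ∈ A, ⨅ b ∈ B, rho a b) (⨆ b ∈ B, ⨅ a ∈ A, rho a b)

def HolderPotential (φ : Sig → ℝ) : Prop :=
  ∃ c > 0, ∃ a > 0, ∀ s t, |φ s - φ t| ≤ c * (rho s t) ^ a

def GibbsOn (X : Set Sig) (φ : Sig → ℝ) (C P : ℝ) (μ : Measure Sig) : Prop :=
  ∀ t ∈ X, ∀ n : ℕ, ∀ t' ∈ cylN t n,
    C⁻¹ * Real.exp (birkhoff φ n t' - n * P) ≤ (μ (cylN t n)).toReal ∧
    (μ (cylN t n)).toReal ≤ C * Real.exp (birkhoff φ n t' - n * P)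

def neigh {n : ℕ} (w : Fin n → Bool) : Set (Fin n → Bool) :=
  {u | |lamF u - lamF w| ≤ (2:ℝ) ^ (-(n:ℤ))}

def pairP (p : ℕ) : Set ((Fin (p+1) → Bool) × (Fin (p+1) → Bool)) :=
  {uv | takeF uv.2 p ∈ neigh (takeF uv.1 p) ∧ uv.2 ∉ neigh uv.1}

noncomputable def oscil (f : ℝ → ℝ) (x r : ℝ) : ℝ :=
  sSup ((fun p : ℝ × ℝ => |f p.1 - f p.2|) ''
    ((Metric.ball x r ∩ Set.Icc 0 1) ×ˢ (Metric.ball x r ∩ Set.Icc 0 1)))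

noncomputable def holderExp (f : ℝ → ℝ) (x : ℝ) : ℝ :=
  liminf (fun r => Real.log (oscil f x r) / Real.log r) (nhdsWithin 0 (Set.Ioi 0))

noncomputable def Ijk (j k : ℕ) : Set ℝ :=
  Set.Ico ((k:ℝ) * (2:ℝ) ^ (-(j:ℤ))) (((k:ℝ) + 1) * (2:ℝ) ^ (-(j:ℤ)))

open scoped Classical in
noncomputable def tauSum (μ : Measure ℝ) (j : ℕ) (q : ℝ) : ℝ :=
  ∑ k ∈ Finset.range (2 ^ j), if μ (Ijk j k) ≠ 0 then (μ (Ijk j k)).toReal ^ q else 0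

noncomputable def tauMeas (μ : Measure ℝ) (q : ℝ) : ℝ :=
  liminf (fun j : ℕ => -(1 / (j:ℝ)) * Real.logb 2 (tauSum μ j q)) atTop

noncomputable def xiF (μ : Measure ℝ) (s₀ p₀ : ℝ) (q : ℝ) : ℝ :=
  q * (s₀ - 1/p₀) + tauMeas μ (q / p₀)

noncomputable def xiStar (μ : Measure ℝ) (s₀ p₀ : ℝ) (h : ℝ) : ℝ :=
  ⨅ q : ℝ, (q * h - xiF μ s₀ p₀ q)

noncomputable def FW {Ω : Type*} (μ : Measure ℝ) (s₀ p₀ : ℝ) (eps : ℕ → ℕ → ℝ)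
    (ψ : ℝ → ℝ) (π : ℕ → ℕ → Ω → ℝ) (ω : Ω) (x : ℝ) : ℝ :=
  ∑' j : ℕ, ∑ k ∈ Finset.range (2 ^ j),
    π j k ω * eps j k * (2:ℝ) ^ (-(j:ℝ) * (s₀ - 1/p₀)) * (μ (Ijk j k)).toReal ^ (1/p₀) *
      ψ ((2:ℝ) ^ (j:ℕ) * x - (k:ℝ))

open scoped Classical in
noncomputable def pressure (X : Set Sig) (φ : Sig → ℝ) : ℝ :=
  liminf (fun n : ℕ => (1 / (n:ℝ)) * Real.log
    (∑ w : Fin n → Bool,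
      if (cylF w ∩ X).Nonempty then Real.exp (sSup (birkhoff φ n '' cylF w)) else 0)) atTop

noncomputable def tauPhi (φ : Sig → ℝ) (q : ℝ) : ℝ :=
  (q * pressure Set.univ φ - pressure Set.univ (fun t => q * φ t)) / Real.log 2

noncomputable def tauPhiStar (φ : Sig → ℝ) (α : ℝ) : ℝ := ⨅ q : ℝ, (q * α - tauPhi φ q)

noncomputable def pGap (X : Set Sig) (φ : Sig → ℝ) (q : ℝ) : ℝ :=
  pressure Set.univ (fun t => q * φ t) - pressure X (fun t => q * φ t)

noncomputable def alphaQ (X : Set Sig) (φ : Sig → ℝ) (q : ℝ) : ℝ :=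
  deriv (tauPhi φ) q + deriv (fun q' => pGap X φ q' / Real.log 2) q

noncomputable def hQ (X : Set Sig) (φ : Sig → ℝ) (s₀ p₀ q : ℝ) : ℝ :=
  s₀ - 1/p₀ + alphaQ X φ q / p₀

noncomputable def DQ (X : Set Sig) (φ : Sig → ℝ) (q : ℝ) : ℝ :=
  tauPhiStar φ (deriv (tauPhi φ) q) -
    (-q * deriv (pGap X φ) q + pGap X φ q) / Real.log 2

open scoped Classical in
noncomputable def indB (μ : Measure Sig) (D ε : ℝ) {n : ℕ} (w : Fin n → Bool) : ℝ :=
  if (μ (cylF w)).toReal ∈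
      Set.Icc ((2:ℝ) ^ (-(n:ℝ) * (D + 2*ε))) ((2:ℝ) ^ (-(n:ℝ) * (D - 2*ε))) then 1 else 0


/-!
Bound `indB u` and `indB v` by `2 ^ (m (D + 2ε))` times the masses of `[u]` and `[v]`, and
`indB (u|_r)` by `1`. Membership in `𝒫_p` puts `λ(v|_r)` in an interval of length
`3·2^{-p} - 2^{-r}` around `λ(u|_p)`: `v|_p` is `2^{-p}`-close to `u|_p` and the letters
`p+1, …, r` add at most `2^{-p} - 2^{-r}`. Such an interval holds at most `3·2^{r-p}` words of
length `r`, since `2^r λ` is an injective integer labelling. For each such word `w`, the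
cylinders `[v] ⊆ [w]` have total mass at most `μ[w]`, and `indB w · μ[w] ≤ 2^{-r(D-2ε)}`;
finally the masses `μ[u]` sum to at most `1`.
-/

open scoped Finset

lemma measurableSet_cylF {k : ℕ} (w : Fin k → Bool) : MeasurableSet (cylF w) := by
  have : cylF w = ⋂ i : Fin k, (fun t : Sig => t i) ⁻¹' {w i} := by ext; simp [cylF]
  rw [this]
  exact .iInter fun i => measurable_pi_apply _ (measurableSet_singleton _)

lemma pairwiseDisjoint_cylF (k : ℕ) : (Set.univ : Set (Fin k → Bool)).PairwiseDisjoint cylF :=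
  fun _ _ _ _ hne => Set.disjoint_left.2 fun _ ht ht' =>
    hne (funext fun i => (ht i).symm.trans (ht' i))

lemma sum_measureReal_cylF_le (μ : Measure Sig) [IsFiniteMeasure μ] {k : ℕ}
    (S : Finset (Fin k → Bool)) {A : Set Sig} (hA : ∀ w ∈ S, cylF w ⊆ A) :
    ∑ w ∈ S, μ.real (cylF w) ≤ μ.real A := by
  rw [← measureReal_biUnion_finset ((pairwiseDisjoint_cylF k).subset (Set.subset_univ _))
    (fun w _ => measurableSet_cylF w)]
  exact measureReal_mono (Set.iUnion₂_subset hA)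

lemma takeF_takeF {m a b : ℕ} (w : Fin m → Bool) (hba : b ≤ a) :
    takeF (takeF w a) b = takeF w b := by
  funext i
  simp only [takeF, dif_pos (i.2.trans_le hba)]

lemma cylF_subset_cylF_takeF {m k : ℕ} (hkm : k ≤ m) (w : Fin m → Bool) :
    cylF w ⊆ cylF (takeF w k) := fun t ht i => by
  simpa only [takeF, dif_pos (i.2.trans_le hkm)] using ht ⟨i, i.2.trans_le hkm⟩

lemma sum_two_zpow_Ico {a b : ℕ} (hab : a ≤ b) :
    ∑ i ∈ Finset.Ico a b, (2:ℝ) ^ (-(i:ℤ) - 1) = 2 ^ (-(a:ℤ)) - 2 ^ (-(b:ℤ)) := by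
  induction b, hab using Nat.le_induction with
  | base => simp
  | succ b hab ih =>
    rw [Finset.sum_Ico_succ_top hab, ih, Nat.cast_succ, neg_add, ← sub_eq_add_neg,
      zpow_sub₀ two_ne_zero]
    ring

lemma lamF_takeInf (t : Sig) (k : ℕ) :
    lamF (takeInf t k) = ∑ i ∈ Finset.range k, if t i then (2:ℝ) ^ (-(i:ℤ) - 1) else 0 :=
  Fin.sum_univ_eq_sum_range (fun i => if t i then (2:ℝ) ^ (-(i:ℤ) - 1) else 0) k

lemma lamF_takeInf_sub_mem_Icc (t : Sig) {a b : ℕ} (hab : a ≤ b) :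
    lamF (takeInf t b) - lamF (takeInf t a) ∈ Set.Icc 0 (2 ^ (-(a:ℤ)) - 2 ^ (-(b:ℤ))) := by
  rw [lamF_takeInf, lamF_takeInf, ← Finset.sum_Ico_eq_sub _ hab, ← sum_two_zpow_Ico hab]
  exact ⟨Finset.sum_nonneg fun i _ => by positivity,
    Finset.sum_le_sum fun i _ => by split <;> [exact le_rfl; positivity]⟩

-- `finFunctionFinEquiv` puts the least significant digit first, hence `j.rev`.
def binVal {k : ℕ} (w : Fin k → Bool) : Fin (2 ^ k) :=
  finFunctionFinEquiv fun j => if w j.rev then 1 else 0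

lemma binVal_injective (k : ℕ) : Function.Injective (binVal (k := k)) := by
  intro w w' h
  have h' := congrFun (finFunctionFinEquiv.injective h)
  funext i
  have := h' i.rev
  simp only [Fin.rev_rev] at this
  cases hw : w i <;> cases hw' : w' i <;> simp_all

lemma lamF_mul_two_pow {k : ℕ} (w : Fin k → Bool) : lamF w * 2 ^ k = (binVal w : ℕ) := by
  rw [binVal, finFunctionFinEquiv_apply, ← Equiv.sum_comp Fin.revPerm]
  simp only [lamF, Finset.sum_mul, Nat.cast_sum, Fin.revPerm_apply, Fin.rev_rev]
  refine Finset.sum_congr rfl fun i _ => ?_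
  split_ifs
  · simp only [Fin.val_rev, Fin.isValue, Fin.val_one, one_mul, Nat.cast_pow,
      Nat.cast_ofNat]
    rw [← zpow_natCast, ← zpow_natCast, ← zpow_add₀ two_ne_zero, Nat.cast_sub (by omega)]
    push_cast
    ring_nf
  · simp

lemma card_lamF_mem_Icc_le (k : ℕ) {a b : ℝ} (hab : a ≤ b) :
    (#{w : Fin k → Bool | lamF w ∈ Set.Icc a b} : ℝ) ≤ (b - a) * 2 ^ k + 1 := by
  have hmaps : ∀ w ∈ ({w : Fin k → Bool | lamF w ∈ Set.Icc a b} : Finset _),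
      ((binVal w : ℕ) : ℤ) ∈ Finset.Icc ⌈a * 2 ^ k⌉ ⌊b * 2 ^ k⌋ := by
    intro w hw
    obtain ⟨hwa, hwb⟩ := (Finset.mem_filter.1 hw).2
    rw [Finset.mem_Icc, Int.ceil_le, Int.le_floor, Int.cast_natCast, ← lamF_mul_two_pow]
    exact ⟨by gcongr, by gcongr⟩
  have hcard := Finset.card_le_card_of_injOn _ hmaps
    fun w _ w' _ h => binVal_injective k (Fin.val_injective (by exact_mod_cast h))
  rw [Int.card_Icc] at hcard
  calc (#{w : Fin k → Bool | lamF w ∈ Set.Icc a b} : ℝ)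
      ≤ (((⌊b * 2 ^ k⌋ + 1 - ⌈a * 2 ^ k⌉).toNat : ℤ) : ℝ) := by exact_mod_cast hcard
    _ ≤ (b - a) * 2 ^ k + 1 := by
      rw [Int.toNat_eq_max]
      push_cast
      have := Int.floor_le (b * 2 ^ k)
      have := Int.le_ceil (a * 2 ^ k)
      have : a * 2 ^ k ≤ b * 2 ^ k := by gcongr
      refine max_le ?_ ?_ <;> linarith

section indB

variable (μ : Measure Sig) (D ε : ℝ) {k : ℕ}

lemma indB_nonneg (w : Fin k → Bool) : 0 ≤ indB μ D ε w := by
  unfold indB; split <;> norm_num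

lemma indB_le_one (w : Fin k → Bool) : indB μ D ε w ≤ 1 := by
  unfold indB; split <;> norm_num

lemma indB_le_rpow_mul_measureReal (w : Fin k → Bool) :
    indB μ D ε w ≤ 2 ^ ((k:ℝ) * (D + 2*ε)) * μ.real (cylF w) := by
  unfold indB
  split_ifs with h
  · calc (1:ℝ) = 2 ^ ((k:ℝ) * (D + 2*ε)) * 2 ^ (-(k:ℝ) * (D + 2*ε)) := by
          rw [← Real.rpow_add two_pos]; simp
      _ ≤ 2 ^ ((k:ℝ) * (D + 2*ε)) * μ.real (cylF w) := by gcongr; exact h.1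
  · positivity

lemma indB_mul_measureReal_le (w : Fin k → Bool) :
    indB μ D ε w * μ.real (cylF w) ≤ 2 ^ (-(k:ℝ) * (D - 2*ε)) := by
  unfold indB
  split_ifs with h
  · rw [one_mul]; exact h.2
  · simp only [zero_mul]; positivity

lemma sum_indB_takeF_mul_measureReal_le [IsFiniteMeasure μ] {m : ℕ} (hkm : k ≤ m)
    (S : Finset (Fin k → Bool)) :
    ∑ v : Fin m → Bool, (if takeF v k ∈ S then indB μ D ε (takeF v k) * μ.real (cylF v) else 0)
      ≤ #S * 2 ^ (-(k:ℝ) * (D - 2*ε)) := by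
  rw [← Finset.sum_fiberwise _ (takeF · k)]
  calc ∑ w, ∑ v with takeF v k = w,
        (if takeF v k ∈ S then indB μ D ε (takeF v k) * μ.real (cylF v) else 0)
      = ∑ w ∈ S, indB μ D ε w * ∑ v with takeF v k = w, μ.real (cylF v) := by
        rw [← Finset.sum_ite_mem_eq S]
        refine Finset.sum_congr rfl fun w _ => ?_
        split_ifs with hw
        · rw [Finset.mul_sum]
          exact Finset.sum_congr rfl fun v hv => by rw [(Finset.mem_filter.1 hv).2, if_pos hw]
        · exact Finset.sum_eq_zero fun v hv => by rw [(Finset.mem_filter.1 hv).2, if_neg hw]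
    _ ≤ ∑ w ∈ S, indB μ D ε w * μ.real (cylF w) := by
        gcongr with w
        · exact indB_nonneg μ D ε w
        · exact sum_measureReal_cylF_le μ _ fun v hv =>
            (Finset.mem_filter.1 hv).2 ▸ cylF_subset_cylF_takeF hkm v
    _ ≤ ∑ _w ∈ S, (2:ℝ) ^ (-(k:ℝ) * (D - 2*ε)) :=
        Finset.sum_le_sum fun w _ => indB_mul_measureReal_le μ D ε w
    _ = #S * 2 ^ (-(k:ℝ) * (D - 2*ε)) := by simp

end indB

def pairWindow (p r : ℕ) (c : ℝ) : Finset (Fin r → Bool) :=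
  {w | lamF w ∈ Set.Icc (c - 2 ^ (-(p:ℤ))) (c + 2 * 2 ^ (-(p:ℤ)) - 2 ^ (-(r:ℤ)))}

lemma card_pairWindow_le {p r : ℕ} (hpr : p ≤ r) (c : ℝ) :
    (#(pairWindow p r c) : ℝ) ≤ 3 * 2 ^ (r - p) := by
  have hrp : (2:ℝ) ^ (-(r:ℤ)) ≤ 2 ^ (-(p:ℤ)) :=
    zpow_le_zpow_right₀ one_le_two (neg_le_neg (Int.ofNat_le.2 hpr))
  have hp : (0:ℝ) < 2 ^ (-(p:ℤ)) := by positivity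
  refine (card_lamF_mem_Icc_le r (by linarith)).trans_eq ?_
  simp only [zpow_neg, zpow_natCast]
  rw [pow_sub₀ _ two_ne_zero hpr]
  field_simp
  ring

lemma takeF_mem_pairWindow_of_mem_pairP {m p r : ℕ} (hpr : p ≤ r) {u v : Fin m → Bool}
    (h : (takeF u (p+1), takeF v (p+1)) ∈ pairP p) :
    takeF v r ∈ pairWindow p r (lamF (takeF u p)) := by
  have hnear : |lamF (takeF v p) - lamF (takeF u p)| ≤ 2 ^ (-(p:ℤ)) := by
    have h1 := h.1
    rwa [takeF_takeF _ p.le_succ, takeF_takeF _ p.le_succ] at h1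
  set t : Sig := fun j => if hj : j < m then v ⟨j, hj⟩ else false
  have hpad (k : ℕ) : takeInf t k = takeF v k := rfl
  obtain ⟨hlow, hup⟩ := lamF_takeInf_sub_mem_Icc t hpr
  rw [hpad, hpad] at hlow hup
  rw [abs_le] at hnear
  exact Finset.mem_filter.2 ⟨Finset.mem_univ _, by linarith, by linarith⟩

open scoped Classical in
lemma pairP_summand_le (μ : Measure Sig) (D ε : ℝ) {m p r : ℕ} (hpr : p ≤ r)
    (u v : Fin m → Bool) :
    (if (takeF u (p+1), takeF v (p+1)) ∈ pairP p then (1:ℝ) else 0) *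
        indB μ D ε (takeF u r) * indB μ D ε (takeF v r) * indB μ D ε u * indB μ D ε v
      ≤ (2 ^ ((m:ℝ) * (D + 2*ε))) ^ 2 * μ.real (cylF u) *
        if takeF v r ∈ pairWindow p r (lamF (takeF u p)) then
          indB μ D ε (takeF v r) * μ.real (cylF v) else 0 := by
  have hvr := indB_nonneg μ D ε (takeF v r)
  have := indB_nonneg μ D ε u
  have := indB_nonneg μ D ε v
  have := indB_le_one μ D ε (takeF u r)
  have := indB_le_rpow_mul_measureReal μ D ε u
  have := indB_le_rpow_mul_measureReal μ D ε v
  split_ifs with hP hW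
  · calc 1 * indB μ D ε (takeF u r) * indB μ D ε (takeF v r) * indB μ D ε u * indB μ D ε v
        ≤ 1 * 1 * indB μ D ε (takeF v r) * (2 ^ ((m:ℝ) * (D + 2*ε)) * μ.real (cylF u)) *
            (2 ^ ((m:ℝ) * (D + 2*ε)) * μ.real (cylF v)) := by
          gcongr
      _ = _ := by ring
  · exact absurd (takeF_mem_pairWindow_of_mem_pairP hpr hP) hW
  · simp only [zero_mul]
    exact mul_nonneg (by positivity) (mul_nonneg hvr measureReal_nonneg)
  · simp only [zero_mul, mul_zero, le_refl]

open scoped Classical in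
theorem counting_lemma_general
    (μ : Measure Sig) [IsProbabilityMeasure μ]
    (p n r m : ℕ) (hr : r = max p n) (hm : r ≤ m)
    (D ε : ℝ) :
    (∑ u : Fin m → Bool, ∑ v : Fin m → Bool,
        (if (takeF u (p+1), takeF v (p+1)) ∈ pairP p then (1:ℝ) else 0) *
          indB μ D ε (takeF u r) * indB μ D ε (takeF v r) * indB μ D ε u * indB μ D ε v)
      ≤ 3 ^ (r - p + 1) * (2:ℝ) ^ (2 * (m:ℝ) * (D + 2*ε) - (r:ℝ) * (D - 2*ε)) := by
  have hpr : p ≤ r := hr ▸ le_max_left p n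
  set K : ℝ := 2 ^ ((m:ℝ) * (D + 2*ε))
  set C : ℝ := 2 ^ (-(r:ℝ) * (D - 2*ε))
  have hinner (u : Fin m → Bool) :
      ∑ v : Fin m → Bool, (if takeF v r ∈ pairWindow p r (lamF (takeF u p)) then
        indB μ D ε (takeF v r) * μ.real (cylF v) else 0) ≤ 3 ^ (r - p + 1) * C := by
    refine (sum_indB_takeF_mul_measureReal_le μ D ε hm _).trans ?_
    gcongr
    calc (#(pairWindow p r _) : ℝ) ≤ 3 * 2 ^ (r - p) := card_pairWindow_le hpr _
      _ ≤ 3 * 3 ^ (r - p) := by gcongr; norm_num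
      _ = 3 ^ (r - p + 1) := (pow_succ' _ _).symm
  have hmass : ∑ u : Fin m → Bool, μ.real (cylF u) ≤ 1 :=
    (sum_measureReal_cylF_le μ _ fun u _ => Set.subset_univ _).trans_eq probReal_univ
  calc _ ≤ ∑ u : Fin m → Bool, K ^ 2 * μ.real (cylF u) * ∑ v : Fin m → Bool,
          (if takeF v r ∈ pairWindow p r (lamF (takeF u p)) then
            indB μ D ε (takeF v r) * μ.real (cylF v) else 0) := by
        simp only [Finset.mul_sum]
        exact Finset.sum_le_sum fun u _ => Finset.sum_le_sum fun v _ =>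
          pairP_summand_le μ D ε hpr u v
    _ ≤ ∑ u : Fin m → Bool, K ^ 2 * μ.real (cylF u) * (3 ^ (r - p + 1) * C) := by
        gcongr with u _
        exact hinner u
    _ = (∑ u : Fin m → Bool, μ.real (cylF u)) * (3 ^ (r - p + 1) * (K ^ 2 * C)) := by
        rw [Finset.sum_mul]; congr 1 with u; ring
    _ ≤ 3 ^ (r - p + 1) * (K ^ 2 * C) := by
        exact mul_le_of_le_one_left (by positivity) hmass
    _ = 3 ^ (r - p + 1) * (2:ℝ) ^ (2 * (m:ℝ) * (D + 2*ε) - (r:ℝ) * (D - 2*ε)) := by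
        rw [sq, ← Real.rpow_add two_pos, ← Real.rpow_add two_pos]
        ring_nf

open scoped Classical in
theorem counting_lemma
    (μ : Measure Sig) [IsProbabilityMeasure μ]
    (p n r m : ℕ) (hp : 1 ≤ p) (hn : 1 ≤ n) (hr : r = max p n) (hm : r ≤ m)
    (D ε : ℝ) (hε : 0 < ε) :
    (∑ u : Fin m → Bool, ∑ v : Fin m → Bool,
        (if (takeF u (p+1), takeF v (p+1)) ∈ pairP p then (1:ℝ) else 0) *
          indB μ D ε (takeF u r) * indB μ D ε (takeF v r) * indB μ D ε u * indB μ D ε v)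
      ≤ 3 ^ (r - p + 1) * (2:ℝ) ^ (2 * (m:ℝ) * (D + 2*ε) - (r:ℝ) * (D - 2*ε)) :=
  counting_lemma_general μ p n r m hr hm D ε

end
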